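/- Every infinite-dimensional normed space contains an essential basic sequence, i.e., a sequence (xₙ) of nonzero vectors that is an essential Schauder basis of the closure of its linear span. -/

import Mathlib

/-!
In an infinite-dimensional space, for every finite-dimensional subspace `F` and `ε > 0` there
is `z ≠ 0` with `‖y‖ ≤ (1 + ε) ‖y + t z‖` for all `y ∈ F` and scalars `t` (Mazur): by
compactness of its unit sphere, `F` is normed up to `1 + ε` by finitely many functionals of norm
at most one, and `z` is taken in their common kernel. Choosing `xₙ` in this way against
`span {x₀, …, xₙ₋₁}` with `εₙ = 2⁻ⁿ` yields Grunblum's condition with constant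
`∏ (1 + εₙ) ≤ e²`.

Grunblum's condition with constant `M` bounds every partial sum of an expansion of `v` by
`M ‖v‖`, so each coefficient satisfies `‖aᵢ xᵢ‖ ≤ 2 M ‖v‖`; this gives uniqueness of expansions,
and it makes the coefficients of expansions of approximants from the span Cauchy, so that their
limits expand every point of the closure.
-/

open Filter Topology

variable (𝕜 : Type*) [RCLike 𝕜]
variable {X : Type*} [NormedAddCommGroup X] [NormedSpace 𝕜 X]

/-- The `n`-th partial sum `∑_{i<n} aᵢ • xᵢ` of the expansion with coefficients `a`. -/
noncomputable def partialSum (x : ℕ → X) (a : ℕ → 𝕜) (n : ℕ) : X :=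
  ∑ i ∈ Finset.range n, a i • x i

/-- `v` has the expansion `v = ∑ᵢ aᵢ xᵢ` (ordered convergence of partial sums). -/
def Expands (x : ℕ → X) (a : ℕ → 𝕜) (v : X) : Prop :=
  Filter.Tendsto (partialSum 𝕜 x a) Filter.atTop (nhds v)

/-- `(xₙ)` is a Schauder basis of `X`: every vector has a unique expansion. -/
def IsSchauderBasis (x : ℕ → X) : Prop :=
  ∀ v : X, ∃! a : ℕ → 𝕜, Expands 𝕜 x a v

/-- `(xₙ)` is an essential Schauder basis of `X`: a Schauder basis for which the canonical
map `T : L_X → X` is an isomorphism; equivalently (since `‖T‖ ≤ 1` always holds), there is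
`C > 0` bounding `η(a) = supₙ ‖∑_{i<n} aᵢxᵢ‖ ≤ C‖v‖` for every expansion `v = ∑ aᵢxᵢ`,
i.e. `‖T⁻¹‖ ≤ C`. -/
def IsEssentialBasis (x : ℕ → X) : Prop :=
  IsSchauderBasis 𝕜 x ∧
    ∃ C > 0, ∀ (a : ℕ → 𝕜) (v : X), Expands 𝕜 x a v →
      ∀ n, ‖partialSum 𝕜 x a n‖ ≤ C * ‖v‖

/-- `(xₙ)` is an essential basic sequence: an essential Schauder basis of the closure of
its linear span. -/
def IsEssentialBasicSeq (x : ℕ → X) : Prop :=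
  (∀ v ∈ closure (Submodule.span 𝕜 (Set.range x) : Set X),
      ∃! a : ℕ → 𝕜, Expands 𝕜 x a v) ∧
    ∃ C > 0, ∀ (a : ℕ → 𝕜) (v : X), Expands 𝕜 x a v →
      ∀ n, ‖partialSum 𝕜 x a n‖ ≤ C * ‖v‖

/-- The Grunblum condition with constant `M`. -/
def Grunblum (x : ℕ → X) (M : ℝ) : Prop :=
  ∀ (a : ℕ → 𝕜) (m n : ℕ), m ≤ n →
    ‖partialSum 𝕜 x a m‖ ≤ M * ‖partialSum 𝕜 x a n‖

section

variable {𝕜}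

lemma partialSum_sub (x : ℕ → X) (a b : ℕ → 𝕜) (n : ℕ) :
    partialSum 𝕜 x (a - b) n = partialSum 𝕜 x a n - partialSum 𝕜 x b n := by
  simp [partialSum, sub_smul, Finset.sum_sub_distrib]

lemma partialSum_succ (x : ℕ → X) (a : ℕ → 𝕜) (n : ℕ) :
    partialSum 𝕜 x a (n + 1) = partialSum 𝕜 x a n + a n • x n :=
  Finset.sum_range_succ _ _

lemma partialSum_mem_span (x : ℕ → X) (a : ℕ → 𝕜) (n : ℕ) :
    partialSum 𝕜 x a n ∈ Submodule.span 𝕜 (Set.range fun i : Fin n => x i) :=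
  Submodule.sum_mem _ fun i hi =>
    Submodule.smul_mem _ _ (Submodule.subset_span ⟨⟨i, Finset.mem_range.mp hi⟩, rfl⟩)

lemma Expands.sub {x : ℕ → X} {a b : ℕ → 𝕜} {v w : X} (ha : Expands 𝕜 x a v)
    (hb : Expands 𝕜 x b w) : Expands 𝕜 x (a - b) (v - w) :=
  (Tendsto.sub ha hb).congr fun n => (partialSum_sub x a b n).symm

lemma exists_expands_of_mem_span {x : ℕ → X} {w : X}
    (hw : w ∈ Submodule.span 𝕜 (Set.range x)) : ∃ a : ℕ → 𝕜, Expands 𝕜 x a w := by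
  obtain ⟨c, rfl⟩ := Finsupp.mem_span_range_iff_exists_finsupp.mp hw
  obtain ⟨N, hN⟩ := c.support.exists_nat_subset_range
  refine ⟨c, tendsto_atTop_of_eventually_const fun n (hn : N ≤ n) => ?_⟩
  exact (c.sum_of_support_subset (hN.trans (Finset.range_mono hn)) (fun i a => a • x i)
    fun i _ => zero_smul 𝕜 (x i)).symm

lemma cauchySeq_of_norm_sub_le {E F : Type*} [SeminormedAddCommGroup E]
    [SeminormedAddCommGroup F] {u : ℕ → E} {w : ℕ → F} (K : ℝ) (hw : CauchySeq w)
    (h : ∀ j k, ‖u j - u k‖ ≤ K * ‖w j - w k‖) : CauchySeq u := by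
  rw [cauchySeq_iff_tendsto_dist_atTop_0] at hw ⊢
  refine squeeze_zero (fun _ => dist_nonneg) (fun p => ?_) (by simpa using hw.const_mul K)
  simpa only [dist_eq_norm] using h p.1 p.2

namespace Grunblum

variable {x : ℕ → X} {M : ℝ}

lemma one_le (hG : Grunblum 𝕜 x M) (hx : x 0 ≠ 0) : 1 ≤ M := by
  have h := hG (fun _ => 1) 1 1 le_rfl
  simp only [partialSum, Finset.range_one, Finset.sum_singleton, one_smul] at h
  exact le_of_mul_le_mul_right (by simpa using h) (norm_pos_iff.mpr hx)

lemma norm_partialSum_le (hG : Grunblum 𝕜 x M) {a : ℕ → 𝕜} {v : X} (h : Expands 𝕜 x a v)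
    (n : ℕ) : ‖partialSum 𝕜 x a n‖ ≤ M * ‖v‖ :=
  ge_of_tendsto (h.norm.const_mul M) (eventually_ge_atTop n |>.mono fun _ => hG a n _)

lemma norm_smul_le (hG : Grunblum 𝕜 x M) {a : ℕ → 𝕜} {v : X} (h : Expands 𝕜 x a v)
    (i : ℕ) : ‖a i • x i‖ ≤ 2 * M * ‖v‖ :=
  calc ‖a i • x i‖ = ‖partialSum 𝕜 x a (i + 1) - partialSum 𝕜 x a i‖ := by
        rw [partialSum_succ, add_sub_cancel_left]
    _ ≤ ‖partialSum 𝕜 x a (i + 1)‖ + ‖partialSum 𝕜 x a i‖ := norm_sub_le _ _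
    _ ≤ 2 * M * ‖v‖ := by
        linarith [hG.norm_partialSum_le h (i + 1), hG.norm_partialSum_le h i]

lemma expands_unique (hG : Grunblum 𝕜 x M) (hx : ∀ n, x n ≠ 0) {a b : ℕ → 𝕜} {v : X}
    (ha : Expands 𝕜 x a v) (hb : Expands 𝕜 x b v) : a = b := by
  funext i
  have h := hG.norm_smul_le (ha.sub hb) i
  rw [sub_self, norm_zero, mul_zero, norm_le_zero_iff, smul_eq_zero] at h
  exact sub_eq_zero.mp (h.resolve_right (hx i))

lemma exists_expands_of_mem_closure (hG : Grunblum 𝕜 x M) (hx : ∀ n, x n ≠ 0) {v : X}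
    (hv : v ∈ closure (Submodule.span 𝕜 (Set.range x) : Set X)) :
    ∃ a : ℕ → 𝕜, Expands 𝕜 x a v := by
  obtain ⟨y, hy_mem, hy_lim⟩ := mem_closure_iff_seq_limit.mp hv
  choose c hc using fun k => exists_expands_of_mem_span (hy_mem k)
  have hcoeff : ∀ i, CauchySeq fun k => c k i := fun i =>
    cauchySeq_of_norm_sub_le (2 * M / ‖x i‖) hy_lim.cauchySeq fun j k => by
      rw [div_mul_eq_mul_div, le_div_iff₀ (norm_pos_iff.mpr (hx i)), ← norm_smul]
      exact hG.norm_smul_le ((hc j).sub (hc k)) i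
  choose a ha using fun i => cauchySeq_tendsto_of_complete (hcoeff i)
  have hclose : ∀ k n, ‖partialSum 𝕜 x a n - partialSum 𝕜 x (c k) n‖ ≤ M * ‖v - y k‖ := by
    intro k n
    have hS : Tendsto (fun j => partialSum 𝕜 x (c j) n) atTop (𝓝 (partialSum 𝕜 x a n)) :=
      tendsto_finsetSum _ fun i _ => (ha i).smul_const (x i)
    refine le_of_tendsto_of_tendsto' (hS.sub_const _).norm
      ((hy_lim.sub_const (y k)).norm.const_mul M) fun j => ?_
    rw [← partialSum_sub]
    exact hG.norm_partialSum_le ((hc j).sub (hc k)) n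
  refine ⟨a, Metric.tendsto_atTop.mpr fun ε hε => ?_⟩
  obtain ⟨k, hk⟩ : ∃ k, (M + 1) * ‖v - y k‖ < ε / 2 := by
    have h := ((tendsto_iff_norm_sub_tendsto_zero.mp hy_lim).const_mul (M + 1))
    rw [mul_zero] at h
    simpa only [norm_sub_rev] using (h.eventually (gt_mem_nhds (half_pos hε))).exists
  obtain ⟨N, hN⟩ := Metric.tendsto_atTop.mp (hc k) (ε / 2) (half_pos hε)
  refine ⟨N, fun n hn => ?_⟩
  have h₁ := hclose k n
  have h₂ := hN n hn
  rw [dist_eq_norm] at h₂ ⊢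
  calc ‖partialSum 𝕜 x a n - v‖
      ≤ ‖partialSum 𝕜 x a n - partialSum 𝕜 x (c k) n‖ + ‖partialSum 𝕜 x (c k) n - y k‖
        + ‖v - y k‖ := by
        rw [norm_sub_rev v]
        linarith [norm_sub_le_norm_sub_add_norm_sub (partialSum 𝕜 x a n)
            (partialSum 𝕜 x (c k) n) v,
          norm_sub_le_norm_sub_add_norm_sub (partialSum 𝕜 x (c k) n) (y k) v]
    _ < ε := by linarith

theorem isEssentialBasicSeq (hG : Grunblum 𝕜 x M) (hx : ∀ n, x n ≠ 0) :
    IsEssentialBasicSeq 𝕜 x :=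
  ⟨fun _ hv => (hG.exists_expands_of_mem_closure hx hv).elim fun a ha =>
      ⟨a, ha, fun _ hb => hG.expands_unique hx hb ha⟩,
    M, zero_lt_one.trans_le (hG.one_le (hx 0)), fun _ _ h => hG.norm_partialSum_le h⟩

end Grunblum

lemma le_prod_one_add_mul_of_le_one_add_mul {s ε : ℕ → ℝ} (hε : ∀ k, 0 ≤ ε k)
    (hs : ∀ k, s k ≤ (1 + ε k) * s (k + 1)) {m n : ℕ} (hmn : m ≤ n) :
    s m ≤ (∏ i ∈ Finset.Ico m n, (1 + ε i)) * s n := by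
  induction n, hmn using Nat.le_induction with
  | base => simp
  | succ n hmn ih =>
    calc s m ≤ (∏ i ∈ Finset.Ico m n, (1 + ε i)) * s n := ih
      _ ≤ (∏ i ∈ Finset.Ico m n, (1 + ε i)) * ((1 + ε n) * s (n + 1)) :=
          mul_le_mul_of_nonneg_left (hs n) (Finset.prod_nonneg fun i _ => by linarith [hε i])
      _ = (∏ i ∈ Finset.Ico m (n + 1), (1 + ε i)) * s (n + 1) := by
          rw [Finset.prod_Ico_succ_top hmn, mul_assoc]

theorem grunblum_of_norm_le_one_add_mul {x : ℕ → X} {ε : ℕ → ℝ} {S : ℝ}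
    (hε : ∀ n, 0 ≤ ε n) (hS : ∀ n, ∑ i ∈ Finset.range n, ε i ≤ S)
    (h : ∀ n, ∀ y ∈ Submodule.span 𝕜 (Set.range fun i : Fin n => x i), ∀ t : 𝕜,
      ‖y‖ ≤ (1 + ε n) * ‖y + t • x n‖) :
    Grunblum 𝕜 x (Real.exp S) := by
  intro a m n hmn
  have hstep : ∀ k, ‖partialSum 𝕜 x a k‖ ≤ (1 + ε k) * ‖partialSum 𝕜 x a (k + 1)‖ :=
    fun k => by simpa only [partialSum_succ] using h k _ (partialSum_mem_span x a k) (a k)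
  have hprod : ∏ i ∈ Finset.Ico m n, (1 + ε i) ≤ Real.exp S :=
    calc ∏ i ∈ Finset.Ico m n, (1 + ε i) ≤ Real.exp (∑ i ∈ Finset.Ico m n, ε i) :=
          Real.prod_one_add_le_exp_sum _ hε
      _ ≤ Real.exp S := Real.exp_le_exp.mpr <| (Finset.sum_le_sum_of_subset_of_nonneg
          (fun i hi => Finset.mem_range.mpr (Finset.mem_Ico.mp hi).2) fun i _ _ => hε i).trans
            (hS n)
  exact (le_prod_one_add_mul_of_le_one_add_mul hε hstep hmn).trans
    (mul_le_mul_of_nonneg_right hprod (norm_nonneg _))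

instance finiteDimensional_span_range {ι : Type*} [Finite ι] (v : ι → X) :
    FiniteDimensional 𝕜 (Submodule.span 𝕜 (Set.range v)) :=
  FiniteDimensional.span_of_finite 𝕜 (Set.finite_range v)

lemma exists_ne_zero_forall_apply_eq_zero {V : Type*} [AddCommGroup V] [Module 𝕜 V]
    (hV : ¬ FiniteDimensional 𝕜 V) {ι : Type*} [Finite ι] (f : ι → V →ₗ[𝕜] 𝕜) :
    ∃ z : V, z ≠ 0 ∧ ∀ i, f i z = 0 := by
  have hker : LinearMap.ker (LinearMap.pi f) ≠ ⊥ := fun h =>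
    hV (FiniteDimensional.of_injective _ (LinearMap.ker_eq_bot.mp h))
  obtain ⟨z, hz, hz0⟩ := Submodule.exists_mem_ne_zero_of_ne_bot hker
  exact ⟨z, hz0, fun i => congrFun (LinearMap.mem_ker.mp hz) i⟩

lemma exists_finset_strongDual_norming (F : Submodule 𝕜 X) [FiniteDimensional 𝕜 F] {ε : ℝ}
    (hε : 0 < ε) :
    ∃ s : Finset (StrongDual 𝕜 X), (∀ f ∈ s, ‖f‖ ≤ 1) ∧
      ∀ y ∈ F, y ≠ 0 → ∃ f ∈ s, ‖y‖ < (1 + ε) * ‖f y‖ := by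
  have hcover : Metric.sphere (0 : F) 1 ⊆
      ⋃ f : {f : StrongDual 𝕜 X // ‖f‖ ≤ 1}, {u | 1 < (1 + ε) * ‖f.1 u‖} := by
    intro u hu
    obtain ⟨f, hf, hfu⟩ := exists_dual_vector'' 𝕜 (u : X)
    have hu1 : ‖(u : X)‖ = 1 := by simpa using hu
    refine Set.mem_iUnion.mpr ⟨⟨f, hf⟩, ?_⟩
    simp only [Set.mem_ofPred_eq, hfu, RCLike.norm_ofReal, hu1, abs_one]
    linarith
  obtain ⟨t, ht⟩ := (isCompact_sphere (0 : F) 1).elim_finite_subcover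
    (fun f : {f : StrongDual 𝕜 X // ‖f‖ ≤ 1} => {u : F | 1 < (1 + ε) * ‖f.1 u‖})
    (fun f => isOpen_lt continuous_const (by fun_prop)) hcover
  refine ⟨t.map (Function.Embedding.subtype _), fun f hf => ?_, fun y hyF hy0 => ?_⟩
  · obtain ⟨g, -, rfl⟩ := Finset.mem_map.mp hf
    exact g.2
  have hy : ‖y‖ ≠ 0 := norm_ne_zero_iff.mpr hy0
  have hu : (‖y‖⁻¹ : 𝕜) • (⟨y, hyF⟩ : F) ∈ Metric.sphere (0 : F) 1 := by
    simp [norm_smul, hy]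
  obtain ⟨f, hft, hf⟩ := Set.mem_iUnion₂.mp (ht hu)
  refine ⟨f.1, Finset.mem_map_of_mem _ hft, ?_⟩
  simp only [SetLike.mk_smul_mk, Set.mem_ofPred_eq, map_smul, smul_eq_mul, norm_mul, norm_inv,
    norm_algebraMap', norm_norm] at hf
  rwa [mul_left_comm, lt_inv_mul_iff₀ (norm_pos_iff.mpr hy0), mul_one] at hf

theorem exists_ne_zero_norm_le_mul_norm_add_smul (hX : ¬ FiniteDimensional 𝕜 X)
    (F : Submodule 𝕜 X) [FiniteDimensional 𝕜 F] {ε : ℝ} (hε : 0 < ε) :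
    ∃ z : X, z ≠ 0 ∧ ∀ y ∈ F, ∀ t : 𝕜, ‖y‖ ≤ (1 + ε) * ‖y + t • z‖ := by
  obtain ⟨s, hs1, hs⟩ := exists_finset_strongDual_norming F hε
  obtain ⟨z, hz0, hz⟩ :=
    exists_ne_zero_forall_apply_eq_zero hX fun f : s => (f : StrongDual 𝕜 X).toLinearMap
  refine ⟨z, hz0, fun y hy t => ?_⟩
  rcases eq_or_ne y 0 with rfl | hy0
  · simp only [norm_zero]
    positivity
  obtain ⟨f, hfs, hfy⟩ := hs y hy hy0
  have hfz : f z = 0 := hz ⟨f, hfs⟩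
  calc ‖y‖ ≤ (1 + ε) * ‖f (y + t • z)‖ := by simpa [hfz] using hfy.le
    _ ≤ (1 + ε) * ‖y + t • z‖ := by
        gcongr
        exact f.le_of_opNorm_le (hs1 f hfs) _ |>.trans_eq (one_mul _)

noncomputable def mazurSeq (hX : ¬ FiniteDimensional 𝕜 X) : ℕ → X
  | n => Classical.choose (exists_ne_zero_norm_le_mul_norm_add_smul hX
      (Submodule.span 𝕜 (Set.range fun i : Fin n => mazurSeq hX i))
      (show (0 : ℝ) < (1 / 2) ^ n by positivity))
  decreasing_by all_goals exact i.2

lemma mazurSeq_spec (hX : ¬ FiniteDimensional 𝕜 X) (n : ℕ) :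
    mazurSeq hX n ≠ 0 ∧
      ∀ y ∈ Submodule.span 𝕜 (Set.range fun i : Fin n => mazurSeq hX i), ∀ t : 𝕜,
        ‖y‖ ≤ (1 + (1 / 2) ^ n) * ‖y + t • mazurSeq hX n‖ := by
  rw [mazurSeq]
  exact Classical.choose_spec (exists_ne_zero_norm_le_mul_norm_add_smul hX
      (Submodule.span 𝕜 (Set.range fun i : Fin n => mazurSeq hX i))
      (show (0 : ℝ) < (1 / 2) ^ n by positivity))

end

/-- every infinite-dimensional normed space contains an essential basic
sequence of nonzero vectors. -/
theorem stmt16 (hX : ¬ FiniteDimensional 𝕜 X) :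
    ∃ x : ℕ → X, (∀ n, x n ≠ 0) ∧ IsEssentialBasicSeq 𝕜 x := by
  have hG : Grunblum 𝕜 (mazurSeq hX) (Real.exp 2) :=
    grunblum_of_norm_le_one_add_mul (fun n => by positivity) sum_geometric_two_le
      fun n => (mazurSeq_spec hX n).2
  exact ⟨mazurSeq hX, fun n => (mazurSeq_spec hX n).1,
    hG.isEssentialBasicSeq fun n => (mazurSeq_spec hX n).1⟩
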